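/- arXiv:1909.01221 — 5 statements merged into one kernel-verified Lean document; each statement's English description precedes it below -/
import Mathlib

section
/- Let α ∈ (0,1) and set r = h⁻¹(α). Then, as ρ → 1⁻, min over d ∈ [0, 2r] of ( 2 − log(1+ρ) − w_d(α,α) − d·log((1−ρ)/(1+ρ)) ) = (1−α) + ((1/2 − √(r(1−r)))/ln 2)·(1−ρ) + o(1−ρ). -/
/-!
Write `r = h⁻¹(α)`, `s = √(r(1-r))` and `t = (1-ρ)/(1+ρ)`. The objective is
`2 - log(1+ρ) - α - G(d)/ln 2`, where `G(d) = r H(d/2r) + (1-r) H(d/2(1-r)) + d ln t` and `H` is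
the binary entropy in nats.
The bounds `-x ln x + x - x² ≤ H(x) ≤ -x ln x + x`, together with the fact that the `-x ln x`
parts combine into `m · negMulLog (d/m)` for `m = 2st`, give `G ≤ m` on `[0, 2r]` and
`G(m) ≥ m - t²`. So for `ρ` near `1` the minimum lies within `t²/ln 2 = O((1-ρ)²)` of the envelope
`2 - log(1+ρ) - α - 2st/ln 2`, whose first-order expansion at `ρ = 1` is the claimed one.
-/

open Finset Asymptotics Filter

/-- Binary entropy function (base-2 logarithms). -/
noncomputable def binEnt (p : ℝ) : ℝ :=
  -(p * Real.logb 2 p) - (1 - p) * Real.logb 2 (1 - p)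

/-- Inverse of the binary entropy function restricted to `[0, 1/2]`. -/
noncomputable def binEntInv (x : ℝ) : ℝ :=
  sSup {p : ℝ | p ∈ Set.Icc (0:ℝ) (1/2) ∧ binEnt p ≤ x}

/-- `p*q = p(1-q) + q(1-p)`. -/
def pstar (p q : ℝ) : ℝ := p * (1 - q) + q * (1 - p)

/-- Probability of the rectangle `A × B` for `ρ`-correlated uniform binary strings. -/
noncomputable def Pxy (n : ℕ) (ρ : ℝ) (A B : Finset (Fin n → Bool)) : ℝ :=
  ∑ a ∈ A, ∑ b ∈ B,
    (2:ℝ)⁻¹ ^ n * ((1 + ρ)/2) ^ n * ((1 - ρ)/(1 + ρ)) ^ (hammingDist a b)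

/-- Hamming sphere of radius `j` around the all-zeros string in `{0,1}^n`. -/
def hSphere (n j : ℕ) : Finset (Fin n → Bool) :=
  Finset.univ.filter (fun x => (Finset.univ.filter (fun i => x i = true)).card = j)

/-- The exponent function `w_d(α,β)`. -/
noncomputable def wd (α β d : ℝ) : ℝ :=
  α + binEntInv α * binEnt (1/2 + (binEntInv β - d)/(2 * binEntInv α))
    + (1 - binEntInv α) * binEnt (1/2 + (d - (1 - binEntInv β))/(2 * (1 - binEntInv α)))

/-- The noise operator `T_ρ`. -/
noncomputable def Tnoise (n : ℕ) (ρ : ℝ) (f : (Fin n → Bool) → ℝ) (y : Fin n → Bool) : ℝ :=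
  ∑ x : Fin n → Bool,
    f x * ((1 + ρ)/2) ^ (n - hammingDist x y) * ((1 - ρ)/2) ^ (hammingDist x y)

/-- The normalized `p`-norm on functions on the hypercube. -/
noncomputable def pNorm (n : ℕ) (p : ℝ) (f : (Fin n → Bool) → ℝ) : ℝ :=
  ((2:ℝ)⁻¹ ^ n * ∑ x : Fin n → Bool, |f x| ^ p) ^ (1/p)

/-- Indicator function of a set `A ⊆ {0,1}^n`. -/
def indA (n : ℕ) (A : Finset (Fin n → Bool)) : (Fin n → Bool) → ℝ :=
  fun x => if x ∈ A then 1 else 0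

open Real Topology

lemma binEnt_eq_binEntropy_div (p : ℝ) : binEnt p = binEntropy p / log 2 := by
  simp only [binEnt, binEntropy, logb, log_inv]
  ring

lemma binEnt_one_sub (p : ℝ) : binEnt (1 - p) = binEnt p := by
  simp only [binEnt_eq_binEntropy_div, binEntropy_one_sub]

lemma binEntInv_le_half {α : ℝ} (hα : 0 ≤ α) : binEntInv α ≤ 1 / 2 :=
  csSup_le ⟨0, ⟨le_rfl, by norm_num⟩, by simpa [binEnt_eq_binEntropy_div] using hα⟩
    fun _ hp ↦ hp.1.2

lemma binEntInv_pos {α : ℝ} (hα : 0 < α) : 0 < binEntInv α := by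
  have hsmall : ∀ᶠ p in 𝓝[>] (0 : ℝ), binEntropy p < α * log 2 ∧ p ∈ Set.Ioo 0 (1 / 2) := by
    have hlim : Tendsto binEntropy (𝓝[>] 0) (𝓝 0) := by
      simpa using (binEntropy_continuous.continuousWithinAt (s := Set.Ioi 0) (x := 0)).tendsto
    exact (hlim.eventually_lt_const (by positivity)).and (Ioo_mem_nhdsGT (by norm_num))
  obtain ⟨p, hpα, hp0, hp⟩ := hsmall.exists
  refine hp0.trans_le (le_csSup ⟨1 / 2, fun _ hq ↦ hq.1.2⟩ ⟨⟨hp0.le, hp.le⟩, ?_⟩)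
  rw [binEnt_eq_binEntropy_div, div_le_iff₀ (log_pos one_lt_two)]
  exact hpα.le

namespace Real

lemma binEntropy_le_negMulLog_add {p : ℝ} (hp : p ≤ 1) : binEntropy p ≤ negMulLog p + p := by
  have := negMulLog_le_one_sub_self (sub_nonneg.2 hp)
  rw [binEntropy_eq_negMulLog_add_negMulLog_one_sub]
  linarith

lemma negMulLog_add_sub_sq_le_binEntropy {p : ℝ} (hp : p ≤ 1) :
    negMulLog p + p - p ^ 2 ≤ binEntropy p := by
  rw [binEntropy_eq_negMulLog_add_negMulLog_one_sub]
  rcases hp.lt_or_eq with hp | rfl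
  · have hlog := log_le_sub_one_of_pos (sub_pos.2 hp)
    have := mul_le_mul_of_nonneg_left hlog (sub_pos.2 hp).le
    simp only [negMulLog]
    nlinarith
  · simp

lemma mul_negMulLog_div {a : ℝ} (ha : a ≠ 0) (x : ℝ) :
    a * negMulLog (x / a) = negMulLog x + x * log a := by
  rcases eq_or_ne x 0 with rfl | hx
  · simp
  simp only [negMulLog, log_div hx ha]
  field_simp
  ring

end Real

/-- `r h(d/2r) + (1-r) h(d/2(1-r))` in nats: the exponential growth rate of the number of points
of the Hamming sphere of radius `rn` at distance `dn` from a fixed point of that sphere. -/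
noncomputable def sphereDistEntropy (r d : ℝ) : ℝ :=
  r * binEntropy (d / (2 * r)) + (1 - r) * binEntropy (d / (2 * (1 - r)))

lemma wd_self {α : ℝ} (hα : 0 < α) (d : ℝ) :
    wd α α d = α + sphereDistEntropy (binEntInv α) d / log 2 := by
  have hr₀ := binEntInv_pos hα
  have hr₁ : 0 < 1 - binEntInv α := by linarith [binEntInv_le_half hα.le]
  have h₁ : 1 / 2 + (binEntInv α - d) / (2 * binEntInv α) = 1 - d / (2 * binEntInv α) := by
    field_simp; ring
  have h₂ : 1 / 2 + (d - (1 - binEntInv α)) / (2 * (1 - binEntInv α))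
      = d / (2 * (1 - binEntInv α)) := by
    field_simp; ring
  rw [wd, h₁, h₂, binEnt_one_sub, binEnt_eq_binEntropy_div, binEnt_eq_binEntropy_div,
    sphereDistEntropy]
  ring

section

variable {r t : ℝ} (hr₀ : 0 < r) (hr₁ : r < 1) (ht : 0 < t)
include hr₀ hr₁ ht

lemma mul_negMulLog_add_mul_negMulLog_add_mul_log (d : ℝ) :
    r * negMulLog (d / (2 * r)) + (1 - r) * negMulLog (d / (2 * (1 - r))) + d * log t
      = 2 * √(r * (1 - r)) * t * negMulLog (d / (2 * √(r * (1 - r)) * t)) := by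
  have hr₁' : 0 < 1 - r := sub_pos.2 hr₁
  have hs : 0 < √(r * (1 - r)) := sqrt_pos.2 (mul_pos hr₀ hr₁')
  have h₁ := mul_negMulLog_div (mul_pos two_pos hr₀).ne' d
  have h₂ := mul_negMulLog_div (mul_pos two_pos hr₁').ne' d
  have h₃ := mul_negMulLog_div (by positivity : 2 * √(r * (1 - r)) * t ≠ 0) d
  rw [log_mul two_ne_zero hr₀.ne'] at h₁
  rw [log_mul two_ne_zero hr₁'.ne'] at h₂
  rw [log_mul (by positivity) ht.ne', log_mul two_ne_zero hs.ne', log_sqrt (by positivity),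
    log_mul hr₀.ne' hr₁'.ne'] at h₃
  linear_combination h₁ / 2 + h₂ / 2 - h₃

lemma sphereDistEntropy_add_mul_log_le {d : ℝ} (hd₀ : 0 ≤ d) (hdr : d ≤ 2 * r)
    (hdr' : d ≤ 2 * (1 - r)) :
    sphereDistEntropy r d + d * log t ≤ 2 * √(r * (1 - r)) * t := by
  have hr₁' : 0 < 1 - r := sub_pos.2 hr₁
  set m := 2 * √(r * (1 - r)) * t
  have hm : 0 < m := by positivity
  have h₁ := binEntropy_le_negMulLog_add ((div_le_one (by positivity)).2 hdr)
  have h₂ := binEntropy_le_negMulLog_add ((div_le_one (by positivity)).2 hdr')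
  have h₃ := negMulLog_le_one_sub_self (div_nonneg hd₀ hm.le)
  calc sphereDistEntropy r d + d * log t
      ≤ r * (negMulLog (d / (2 * r)) + d / (2 * r))
        + (1 - r) * (negMulLog (d / (2 * (1 - r))) + d / (2 * (1 - r))) + d * log t := by
        rw [sphereDistEntropy]; gcongr
    _ = m * negMulLog (d / m) + d := by
        rw [← mul_negMulLog_add_mul_negMulLog_add_mul_log hr₀ hr₁ ht]
        field_simp
        ring
    _ ≤ m * (1 - d / m) + d := by gcongr
    _ = m := by field_simp; ring

lemma sub_sq_le_sphereDistEntropy_add_mul_log (hsr : √(r * (1 - r)) * t ≤ r)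
    (hsr' : √(r * (1 - r)) * t ≤ 1 - r) :
    2 * √(r * (1 - r)) * t - t ^ 2
      ≤ sphereDistEntropy r (2 * √(r * (1 - r)) * t)
        + 2 * √(r * (1 - r)) * t * log t := by
  have hr₁' : 0 < 1 - r := sub_pos.2 hr₁
  set s := √(r * (1 - r))
  have hs2 : s ^ 2 = r * (1 - r) := sq_sqrt (by positivity)
  have hsplit := mul_negMulLog_add_mul_negMulLog_add_mul_log hr₀ hr₁ ht (2 * s * t)
  rw [div_self (by positivity), negMulLog_one, mul_zero] at hsplit
  set x₁ := 2 * s * t / (2 * r)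
  set x₂ := 2 * s * t / (2 * (1 - r))
  have hx₁ : r * x₁ = s * t := by simp only [x₁]; field_simp
  have hx₂ : (1 - r) * x₂ = s * t := by simp only [x₂]; field_simp
  have hq : r * x₁ ^ 2 + (1 - r) * x₂ ^ 2 = t ^ 2 := by
    simp only [x₁, x₂]
    field_simp
    linear_combination hs2
  have h₁ := negMulLog_add_sub_sq_le_binEntropy (p := x₁)
    ((div_le_one (by positivity)).2 (by linarith))
  have h₂ := negMulLog_add_sub_sq_le_binEntropy (p := x₂)
    ((div_le_one (by positivity)).2 (by linarith))
  calc 2 * s * t - t ^ 2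
      = r * (negMulLog x₁ + x₁ - x₁ ^ 2) + (1 - r) * (negMulLog x₂ + x₂ - x₂ ^ 2)
        + 2 * s * t * log t := by
        linear_combination -hsplit - hx₁ - hx₂ + hq
    _ ≤ sphereDistEntropy r (2 * s * t) + 2 * s * t * log t := by
        rw [sphereDistEntropy]; gcongr

end

lemma csInf_image_mem_Icc {ι β : Type*} [ConditionallyCompleteLattice β] {f : ι → β}
    {s : Set ι} {x₀ : ι} {a b : β} (hx₀ : x₀ ∈ s) (ha : ∀ x ∈ s, a ≤ f x) (hb : f x₀ ≤ b) :
    sInf (f '' s) ∈ Set.Icc a b :=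
  ⟨le_csInf ⟨f x₀, Set.mem_image_of_mem f hx₀⟩ (Set.forall_mem_image.2 ha),
    (csInf_le ⟨a, Set.forall_mem_image.2 ha⟩ (Set.mem_image_of_mem f hx₀)).trans hb⟩

lemma sInf_image_sub_wd_self_mem_Icc {α c t : ℝ} (hα : 0 < α) (ht : 0 < t)
    (hst : √(binEntInv α * (1 - binEntInv α)) * t ≤ binEntInv α) :
    sInf ((fun d ↦ c - wd α α d - d * logb 2 t) '' Set.Icc 0 (2 * binEntInv α)) ∈
      Set.Icc (c - α - 2 * √(binEntInv α * (1 - binEntInv α)) * t / log 2)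
        (c - α - 2 * √(binEntInv α * (1 - binEntInv α)) * t / log 2 + t ^ 2 / log 2) := by
  set r := binEntInv α
  have hr₀ : 0 < r := binEntInv_pos hα
  have hr_half : r ≤ 1 / 2 := binEntInv_le_half hα.le
  have hr₁ : r < 1 := by linarith
  have hlog2 : 0 < log 2 := log_pos one_lt_two
  have hF : ∀ d, c - wd α α d - d * logb 2 t
      = c - α - (sphereDistEntropy r d + d * log t) / log 2 := by
    intro d
    rw [wd_self hα, logb]
    ring
  simp only [hF]
  refine csInf_image_mem_Icc (x₀ := 2 * √(r * (1 - r)) * t) ⟨by positivity, by linarith⟩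
    (fun d hd ↦ ?_) ?_
  · have := sphereDistEntropy_add_mul_log_le hr₀ hr₁ ht hd.1 hd.2 (by linarith [hd.2])
    gcongr
  · have := div_le_div_of_nonneg_right
      (sub_sq_le_sphereDistEntropy_add_mul_log hr₀ hr₁ ht hst (by linarith)) hlog2.le
    rw [sub_div] at this
    linarith

lemma isLittleO_sub_of_hasDerivAt {f g : ℝ → ℝ} {f' x : ℝ} (hf : HasDerivAt f f' x)
    (hg : HasDerivAt g f' x) (hfg : f x = g x) :
    (fun y ↦ f y - g y) =o[𝓝 x] fun y ↦ y - x := by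
  simpa [hfg] using (hf.sub hg).isLittleO

lemma hasDerivAt_one_sub_div_one_add : HasDerivAt (fun ρ : ℝ ↦ (1 - ρ) / (1 + ρ)) (-1 / 2) 1 := by
  refine (((hasDerivAt_id' 1).const_sub 1).div ((hasDerivAt_id' 1).const_add 1)
    (by norm_num)).congr_deriv ?_
  norm_num

lemma isLittleO_sq_one_sub_div_one_add (c : ℝ) :
    (fun ρ : ℝ ↦ ((1 - ρ) / (1 + ρ)) ^ 2 / c) =o[𝓝 1] fun ρ ↦ ρ - 1 := by
  simpa using isLittleO_sub_of_hasDerivAt ((hasDerivAt_one_sub_div_one_add.pow 2).div_const c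
    |>.congr_deriv (by norm_num)) (hasDerivAt_const 1 0) (by norm_num)

/-- Both sides equal `1 - α` at `ρ = 1` and have slope `(s - 1/2) / log 2` there. -/
lemma isLittleO_logb_sub_mul_one_sub_div_one_add (α s : ℝ) :
    (fun ρ ↦ (2 - logb 2 (1 + ρ) - α - 2 * s * ((1 - ρ) / (1 + ρ)) / log 2)
      - ((1 - α) + (1 / 2 - s) / log 2 * (1 - ρ))) =o[𝓝 1] fun ρ ↦ ρ - 1 := by
  refine isLittleO_sub_of_hasDerivAt (f' := (1 / 2 - s) / log 2 * -1) ?_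
    (((hasDerivAt_id' 1).const_sub 1).const_mul _ |>.const_add _)
    (by norm_num [logb_self_eq_one])
  exact (((((hasDerivAt_id' 1).const_add 1).log (by norm_num)).div_const (log 2)).const_sub 2
    |>.sub_const α |>.sub ((hasDerivAt_one_sub_div_one_add.const_mul (2 * s)).div_const (log 2))
    ).congr_deriv (by field_simp; ring)

lemma isLittleO_sub_of_mem_Icc {ι E : Type*} [Norm E] {l : Filter ι} {F φ q T : ι → ℝ}
    {k : ι → E} (hφ : (fun x ↦ φ x - T x) =o[l] k) (hq : q =o[l] k)
    (hF : ∀ᶠ x in l, F x ∈ Set.Icc (φ x) (φ x + q x)) :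
    (fun x ↦ F x - T x) =o[l] k := by
  have hclose : (fun x ↦ F x - φ x) =O[l] q := by
    refine IsBigO.of_bound' (hF.mono fun x hx ↦ ?_)
    rw [norm_of_nonneg (by linarith [hx.1]), norm_of_nonneg (by linarith [hx.1, hx.2])]
    linarith [hx.2]
  exact ((hclose.trans_isLittleO hq).add hφ).congr_left fun x ↦ by ring

/-- expansion of the spherical exponent for `α = β` as `ρ → 1⁻`. -/
theorem stmt_3 (α : ℝ) (hα : α ∈ Set.Ioo (0:ℝ) 1) :
    (fun ρ : ℝ =>
        sInf ((fun d : ℝ =>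
            2 - Real.logb 2 (1 + ρ) - wd α α d - d * Real.logb 2 ((1 - ρ)/(1 + ρ))) ''
          Set.Icc 0 (2 * binEntInv α))
        - (1 - α)
        - ((1/2 - Real.sqrt (binEntInv α * (1 - binEntInv α))) / Real.log 2) * (1 - ρ))
      =o[nhdsWithin 1 (Set.Iio 1)] fun ρ : ℝ => 1 - ρ := by
  set r := binEntInv α
  set s := √(r * (1 - r))
  let F : ℝ → ℝ := fun ρ ↦ sInf ((fun d ↦ 2 - logb 2 (1 + ρ) - wd α α d
      - d * logb 2 ((1 - ρ) / (1 + ρ))) '' Set.Icc 0 (2 * r))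
  have hbound : ∀ᶠ ρ in 𝓝[<] 1, F ρ ∈
      Set.Icc (2 - logb 2 (1 + ρ) - α - 2 * s * ((1 - ρ) / (1 + ρ)) / log 2)
        (2 - logb 2 (1 + ρ) - α - 2 * s * ((1 - ρ) / (1 + ρ)) / log 2
          + ((1 - ρ) / (1 + ρ)) ^ 2 / log 2) := by
    have hnear : ∀ᶠ ρ in 𝓝 (1 : ℝ), s * ((1 - ρ) / (1 + ρ)) < r :=
      (hasDerivAt_one_sub_div_one_add.continuousAt.const_mul s).eventually_lt continuousAt_const
        (by norm_num; exact binEntInv_pos hα.1)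
    filter_upwards [nhdsWithin_le_nhds hnear, Ioo_mem_nhdsLT (show (-1 : ℝ) < 1 by norm_num)]
      with ρ hρr hρ
    exact sInf_image_sub_wd_self_mem_Icc hα.1 (div_pos (by linarith [hρ.2]) (by linarith [hρ.1])) hρr.le
  have hsandwich := isLittleO_sub_of_mem_Icc
    ((isLittleO_logb_sub_mul_one_sub_div_one_add α s).mono nhdsWithin_le_nhds)
    ((isLittleO_sq_one_sub_div_one_add (log 2)).mono nhdsWithin_le_nhds) hbound
  exact (isLittleO_neg_right.2 hsandwich).congr (fun ρ ↦ by ring) fun ρ ↦ neg_sub ρ 1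
end

section
/- Let 0 < α ≤ β < 1. The function d ↦ w_d(α,β) is strictly concave on the interval [h⁻¹(β)−h⁻¹(α), h⁻¹(β)+h⁻¹(α)], its derivative vanishes at d* = h⁻¹(α) * h⁻¹(β) (which lies in this interval), and its maximum value over this interval equals α + β, attained at d = d*. -/
open Finset Asymptotics Filter

/-! With `A = h⁻¹(α)`, `B = h⁻¹(β)`, one has `w_d = α + A h(x_d) + (1 - A) h(y_d)`
where `x_d, y_d ∈ [0, 1]` are affine in `d` with slopes of opposite signs and
`A x_d + (1 - A) y_d = B` for every `d`. Jensen's inequality for the concave `h` gives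
`w_d ≤ α + h(B) = α + β`, with equality at `d* = A * B`, where `x_{d*} = y_{d*} = B`; there the
derivatives of the two terms, `∓ h'(B) / 2`, cancel. -/

theorem StrictConcaveOn.const_mul {s : Set ℝ} {f : ℝ → ℝ} (hf : StrictConcaveOn ℝ s f)
    {c : ℝ} (hc : 0 < c) : StrictConcaveOn ℝ s (fun x => c * f x) := by
  refine ⟨hf.1, fun x hx y hy hxy u v hu hv huv => ?_⟩
  have h := mul_lt_mul_of_pos_left (hf.2 hx hy hxy hu hv huv) hc
  simp only [smul_eq_mul] at h ⊢
  linarith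

theorem StrictConcaveOn.comp_affine {s t : Set ℝ} {f ℓ : ℝ → ℝ} (hf : StrictConcaveOn ℝ t f)
    (hs : Convex ℝ s) {e m : ℝ} (hℓ : ∀ x, ℓ x = e + m * x) (hm : m ≠ 0)
    (hst : Set.MapsTo ℓ s t) : StrictConcaveOn ℝ s (fun x => f (ℓ x)) := by
  refine ⟨hs, fun x hx y hy hxy u v hu hv huv => ?_⟩
  have hcomb : ℓ (u • x + v • y) = u • ℓ x + v • ℓ y := by
    simp only [smul_eq_mul, hℓ]
    linear_combination (-e) * huv
  have hne : ℓ x ≠ ℓ y := by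
    rw [hℓ, hℓ]
    exact fun h => hxy (mul_left_cancel₀ hm (add_left_cancel h))
  show u • f (ℓ x) + v • f (ℓ y) < f (ℓ (u • x + v • y))
  rw [hcomb]
  exact hf.2 (hst hx) (hst hy) hne hu hv huv

theorem binEnt_eq_binEntropy : binEnt = fun p => (Real.log 2)⁻¹ * Real.binEntropy p := by
  ext p
  unfold binEnt Real.binEntropy Real.logb
  rw [Real.log_inv, Real.log_inv]
  ring

theorem binEnt_zero : binEnt 0 = 0 := by simp [binEnt_eq_binEntropy]

theorem binEnt_half : binEnt (1/2) = 1 := by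
  simp only [binEnt_eq_binEntropy]
  rw [one_div, Real.binEntropy_two_inv, inv_mul_cancel₀ (Real.log_pos one_lt_two).ne']

theorem continuous_binEnt : Continuous binEnt := by
  rw [binEnt_eq_binEntropy]; exact Real.binEntropy_continuous.const_mul _

theorem binEnt_strictMonoOn : StrictMonoOn binEnt (Set.Icc 0 (1/2)) := by
  intro x hx y hy hxy
  rw [one_div] at hx hy
  simp only [binEnt_eq_binEntropy]
  exact mul_lt_mul_of_pos_left (Real.binEntropy_strictMonoOn hx hy hxy)
    (inv_pos.2 (Real.log_pos one_lt_two))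

theorem strictConcaveOn_binEnt : StrictConcaveOn ℝ (Set.Icc 0 1) binEnt := by
  rw [binEnt_eq_binEntropy]
  exact Real.strictConcave_binEntropy.const_mul (inv_pos.2 (Real.log_pos one_lt_two))

theorem hasDerivAt_binEnt {p : ℝ} (h0 : p ≠ 0) (h1 : p ≠ 1) :
    HasDerivAt binEnt ((Real.log 2)⁻¹ * (Real.log (1 - p) - Real.log p)) p := by
  rw [binEnt_eq_binEntropy]; exact (Real.hasDerivAt_binEntropy h0 h1).const_mul (Real.log 2)⁻¹

section binEntInv

variable {x y : ℝ}

theorem binEntInv_eq {p : ℝ} (hp : p ∈ Set.Icc (0:ℝ) (1/2)) (hpx : binEnt p = x) :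
    binEntInv x = p := by
  refine IsGreatest.csSup_eq ⟨⟨hp, hpx.le⟩, fun q ⟨hq, hqx⟩ => ?_⟩
  exact (binEnt_strictMonoOn.le_iff_le hq hp).1 (hpx ▸ hqx)

theorem binEntInv_spec (hx : x ∈ Set.Icc (0:ℝ) 1) :
    binEntInv x ∈ Set.Icc (0:ℝ) (1/2) ∧ binEnt (binEntInv x) = x := by
  obtain ⟨p, hp, hpx⟩ : ∃ p ∈ Set.Icc (0:ℝ) (1/2), binEnt p = x :=
    intermediate_value_Icc (by norm_num) continuous_binEnt.continuousOn
      (by rwa [binEnt_zero, binEnt_half])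
  rw [binEntInv_eq hp hpx]
  exact ⟨hp, hpx⟩

theorem binEntInv_pos_s6 (h0 : 0 < x) (h1 : x ≤ 1) : 0 < binEntInv x := by
  obtain ⟨⟨hnonneg, -⟩, hent⟩ := binEntInv_spec ⟨h0.le, h1⟩
  refine hnonneg.lt_of_ne fun h => ?_
  rw [← h, binEnt_zero] at hent
  exact h0.ne hent

theorem binEntInv_lt_half (h0 : 0 ≤ x) (h1 : x < 1) : binEntInv x < 1/2 := by
  obtain ⟨⟨-, hle⟩, hent⟩ := binEntInv_spec ⟨h0, h1.le⟩
  refine hle.lt_of_ne fun h => ?_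
  rw [h, binEnt_half] at hent
  exact h1.ne hent.symm

theorem binEntInv_le_binEntInv (h0 : 0 ≤ x) (hxy : x ≤ y) (hy : y ≤ 1) :
    binEntInv x ≤ binEntInv y := by
  obtain ⟨hx, hentx⟩ := binEntInv_spec ⟨h0, hxy.trans hy⟩
  obtain ⟨hy, henty⟩ := binEntInv_spec ⟨h0.trans hxy, hy⟩
  rwa [← binEnt_strictMonoOn.le_iff_le hx hy, hentx, henty]

end binEntInv

noncomputable def wdArg₁ (a b d : ℝ) : ℝ := 1/2 + (b - d)/(2 * a)

noncomputable def wdArg₂ (a b d : ℝ) : ℝ := 1/2 + (d - (1 - b))/(2 * (1 - a))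

noncomputable def wdMix (f : ℝ → ℝ) (a b d : ℝ) : ℝ := a * f (wdArg₁ a b d) + (1 - a) * f (wdArg₂ a b d)

theorem wd_eq_add_wdMix (α β d : ℝ) :
    wd α β d = α + wdMix binEnt (binEntInv α) (binEntInv β) d :=
  add_assoc _ _ _

section wdMix

variable {f : ℝ → ℝ} {a b d : ℝ}

theorem wdArg₁_eq_affine (a b d : ℝ) : wdArg₁ a b d = (1/2 + b/(2 * a)) + -(2 * a)⁻¹ * d := by
  unfold wdArg₁; ring

theorem wdArg₂_eq_affine (a b d : ℝ) :
    wdArg₂ a b d = (1/2 - (1 - b)/(2 * (1 - a))) + (2 * (1 - a))⁻¹ * d := by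
  unfold wdArg₂; ring

theorem hasDerivAt_wdArg₁ : HasDerivAt (wdArg₁ a b) (-(2 * a)⁻¹) d := by
  rw [funext (wdArg₁_eq_affine a b)]
  simpa using ((hasDerivAt_id d).const_mul (-(2 * a)⁻¹)).const_add (1/2 + b/(2 * a))

theorem hasDerivAt_wdArg₂ : HasDerivAt (wdArg₂ a b) (2 * (1 - a))⁻¹ d := by
  rw [funext (wdArg₂_eq_affine a b)]
  simpa using ((hasDerivAt_id d).const_mul (2 * (1 - a))⁻¹).const_add
    (1/2 - (1 - b)/(2 * (1 - a)))

theorem wdArg₁_mem_Icc (ha : 0 < a) (hd : d ∈ Set.Icc (b - a) (b + a)) : wdArg₁ a b d ∈ Set.Icc 0 1 := by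
  have hlo : -(1/2) ≤ (b - d)/(2 * a) := by rw [le_div_iff₀ (by positivity)]; linarith [hd.2]
  have hhi : (b - d)/(2 * a) ≤ 1/2 := by rw [div_le_iff₀ (by positivity)]; linarith [hd.1]
  exact ⟨by unfold wdArg₁; linarith, by unfold wdArg₁; linarith⟩

theorem wdArg₂_mem_Icc (hab : a ≤ b) (hsum : a + b ≤ 1) (hd : d ∈ Set.Icc (b - a) (b + a)) :
    wdArg₂ a b d ∈ Set.Icc 0 1 := by
  have ha : 0 < 1 - a := by linarith
  have hlo : -(1/2) ≤ (d - (1 - b))/(2 * (1 - a)) := by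
    rw [le_div_iff₀ (by positivity)]; linarith [hd.1]
  have hhi : (d - (1 - b))/(2 * (1 - a)) ≤ 1/2 := by
    rw [div_le_iff₀ (by positivity)]; linarith [hd.2]
  exact ⟨by unfold wdArg₂; linarith, by unfold wdArg₂; linarith⟩

theorem wdArg_combination (ha0 : a ≠ 0) (ha1 : a ≠ 1) :
    a * wdArg₁ a b d + (1 - a) * wdArg₂ a b d = b := by
  have : 1 - a ≠ 0 := sub_ne_zero.2 ha1.symm
  unfold wdArg₁ wdArg₂
  field_simp
  ring

theorem wdArg₁_pstar (ha : a ≠ 0) : wdArg₁ a b (pstar a b) = b := by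
  unfold wdArg₁ pstar
  field_simp
  ring

theorem wdArg₂_pstar (ha : a ≠ 1) : wdArg₂ a b (pstar a b) = b := by
  have : 1 - a ≠ 0 := sub_ne_zero.2 ha.symm
  unfold wdArg₂ pstar
  field_simp
  ring

theorem pstar_mem_Icc (ha : 0 ≤ a) (hb0 : 0 ≤ b) (hb1 : b ≤ 1) :
    pstar a b ∈ Set.Icc (b - a) (b + a) := by
  unfold pstar
  constructor <;> nlinarith

theorem StrictConcaveOn.wdMix (hf : StrictConcaveOn ℝ (Set.Icc 0 1) f) (ha : 0 < a) (hab : a ≤ b)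
    (hsum : a + b ≤ 1) : StrictConcaveOn ℝ (Set.Icc (b - a) (b + a)) (wdMix f a b) := by
  have h₁ := (hf.comp_affine (convex_Icc _ _) (wdArg₁_eq_affine a b) (by simpa using ha.ne')
    fun _ => wdArg₁_mem_Icc ha).const_mul ha
  have h₂ := (hf.comp_affine (convex_Icc _ _) (wdArg₂_eq_affine a b) (by simp; linarith)
    fun _ => wdArg₂_mem_Icc hab hsum).const_mul (by linarith : 0 < 1 - a)
  exact h₁.add h₂

theorem ConcaveOn.wdMix_le (hf : ConcaveOn ℝ (Set.Icc 0 1) f) (ha : 0 < a) (hab : a ≤ b)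
    (hsum : a + b ≤ 1) (hd : d ∈ Set.Icc (b - a) (b + a)) : wdMix f a b d ≤ f b := by
  have h := hf.2 (wdArg₁_mem_Icc ha hd) (wdArg₂_mem_Icc hab hsum hd) ha.le (by linarith)
    (add_sub_cancel a 1)
  simp only [smul_eq_mul] at h
  rwa [wdArg_combination ha.ne' (by linarith)] at h

theorem wdMix_pstar (ha0 : a ≠ 0) (ha1 : a ≠ 1) : wdMix f a b (pstar a b) = f b := by
  rw [wdMix, wdArg₁_pstar ha0, wdArg₂_pstar ha1]
  ring

theorem HasDerivAt.wdMix_pstar {f' : ℝ} (hf : HasDerivAt f f' b) (ha0 : a ≠ 0) (ha1 : a ≠ 1) :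
    HasDerivAt (wdMix f a b) 0 (pstar a b) := by
  have h₁ : HasDerivAt (fun d => f (wdArg₁ a b d)) (f' * -(2 * a)⁻¹) (pstar a b) :=
    HasDerivAt.comp _ (by rwa [wdArg₁_pstar ha0]) hasDerivAt_wdArg₁
  have h₂ : HasDerivAt (fun d => f (wdArg₂ a b d)) (f' * (2 * (1 - a))⁻¹) (pstar a b) :=
    HasDerivAt.comp _ (by rwa [wdArg₂_pstar ha1]) hasDerivAt_wdArg₂
  have : 1 - a ≠ 0 := sub_ne_zero.2 ha1.symm
  refine ((h₁.const_mul a).add (h₂.const_mul (1 - a))).congr_deriv ?_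
  field_simp
  ring

end wdMix

/-- `d ↦ w_d(α,β)` is strictly concave, has vanishing derivative at
`d* = h⁻¹(α) * h⁻¹(β)`, and attains its maximum value `α + β` there. -/
theorem stmt_6 (α β : ℝ) (hα : 0 < α) (hαβ : α ≤ β) (hβ : β < 1) :
    StrictConcaveOn ℝ (Set.Icc (binEntInv β - binEntInv α) (binEntInv β + binEntInv α))
        (fun d : ℝ => wd α β d) ∧
    pstar (binEntInv α) (binEntInv β)
        ∈ Set.Icc (binEntInv β - binEntInv α) (binEntInv β + binEntInv α) ∧
    HasDerivAt (fun d : ℝ => wd α β d) 0 (pstar (binEntInv α) (binEntInv β)) ∧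
    wd α β (pstar (binEntInv α) (binEntInv β)) = α + β ∧
    ∀ d ∈ Set.Icc (binEntInv β - binEntInv α) (binEntInv β + binEntInv α),
      wd α β d ≤ α + β := by
  have hβ0 : 0 < β := hα.trans_le hαβ
  have hBent : binEnt (binEntInv β) = β := (binEntInv_spec ⟨hβ0.le, hβ.le⟩).2
  have hA : 0 < binEntInv α := binEntInv_pos_s6 hα (hαβ.trans hβ.le)
  have hAB : binEntInv α ≤ binEntInv β := binEntInv_le_binEntInv hα.le hαβ hβ.le
  have hB : binEntInv β < 1/2 := binEntInv_lt_half hβ0.le hβ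
  have hsum : binEntInv α + binEntInv β ≤ 1 := by linarith
  have hA1 : binEntInv α ≠ 1 := by linarith
  simp only [wd_eq_add_wdMix]
  refine ⟨(strictConcaveOn_binEnt.wdMix hA hAB hsum).add_const α |>.congr fun _ _ => add_comm _ _,
    pstar_mem_Icc hA.le (hA.le.trans hAB) (by linarith),
    ((hasDerivAt_binEnt (hA.trans_le hAB).ne' (by linarith)).wdMix_pstar hA.ne' hA1).const_add α,
    by rw [wdMix_pstar hA.ne' hA1, hBent], fun d hd => ?_⟩
  have := strictConcaveOn_binEnt.concaveOn.wdMix_le hA hAB hsum hd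
  linarith
end

section
/- Let n, i, j, k be natural numbers with i ≤ j ≤ n, j − i ≤ k ≤ i + j, and i + j − k even. Then the number of pairs (a,b) ∈ S_i × S_j with d(a,b) = k equals C(n,i) · C(i, (i+j−k)/2) · C(n−i, (j−i+k)/2), where C(·,·) denotes the binomial coefficient. -/
open Finset Asymptotics Filter

/-!
Identify a string with its set of `true` coordinates. For `a` of weight `i` with support `A`,
a string `b` with support `B` has weight `|B ∩ A| + |B \ A|` and distance `|A \ B| + |B \ A|`
from `a`, so weight `j` and distance `k` force `|B ∩ A| = (i+j-k)/2` and `|B \ A| = (j-i+k)/2`.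
The two parts are chosen independently inside `A` and its complement, and the count does not
depend on which of the `C(n,i)` strings `a` is.
-/

namespace BoolCube

variable {ι : Type*} [Fintype ι] [DecidableEq ι]

def trueSupport (x : ι → Bool) : Finset ι := {i | x i = true}

omit [DecidableEq ι] in
@[simp] lemma mem_trueSupport {x : ι → Bool} {i : ι} : i ∈ trueSupport x ↔ x i = true := by
  simp [trueSupport]

def equivFinset : (ι → Bool) ≃ Finset ι where
  toFun := trueSupport
  invFun s i := decide (i ∈ s)
  left_inv x := by ext i; simp
  right_inv s := by ext i; simp

lemma hammingDist_eq_card_sdiff_add_card_sdiff (x y : ι → Bool) :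
    hammingDist x y = #(trueSupport x \ trueSupport y) + #(trueSupport y \ trueSupport x) := by
  rw [← card_union_of_disjoint disjoint_sdiff_sdiff, hammingDist]
  congr 1
  ext i
  cases hx : x i <;> cases hy : y i <;> simp [hx, hy]

lemma card_filter_card_trueSupport_eq (j : ℕ) :
    #{x : ι → Bool | #(trueSupport x) = j} = (Fintype.card ι).choose j := by
  rw [← card_univ, ← card_powersetCard]
  exact card_equiv equivFinset (by simp [equivFinset])

lemma card_filter_card_inter_eq_card_sdiff_eq (A : Finset ι) (u s : ℕ) :
    #{B : Finset ι | #(B ∩ A) = u ∧ #(B \ A) = s} = (#A).choose u * (#Aᶜ).choose s := by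
  rw [← card_powersetCard, ← card_powersetCard, ← card_product]
  have split {P Q : Finset ι} (hP : P ⊆ A) (hQ : Q ⊆ Aᶜ) : (P ∪ Q) ∩ A = P ∧ (P ∪ Q) \ A = Q := by
    constructor <;> ext i <;> grind [mem_compl]
  refine card_nbij' (fun B ↦ (B ∩ A, B \ A)) (fun PQ ↦ PQ.1 ∪ PQ.2) ?_ ?_ ?_ ?_
  · intro B hB
    simp only [coe_filter, mem_univ, true_and, Set.mem_ofPred_eq] at hB
    simp [mem_powersetCard, hB, subset_iff]
  · rintro ⟨P, Q⟩ hPQ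
    simp only [coe_product, Set.mem_prod, mem_coe, mem_powersetCard] at hPQ
    obtain ⟨hP, hQ⟩ := split hPQ.1.1 hPQ.2.1
    simp [hP, hQ, hPQ.1.2, hPQ.2.2]
  · intro B _
    exact sup_inf_sdiff B A
  · rintro ⟨P, Q⟩ hPQ
    simp only [coe_product, Set.mem_prod, mem_coe, mem_powersetCard] at hPQ
    obtain ⟨hP, hQ⟩ := split hPQ.1.1 hPQ.2.1
    simp [hP, hQ]

lemma card_filter_card_trueSupport_eq_and_hammingDist_eq (a : ι → Bool) {u s : ℕ}
    (hu : u ≤ #(trueSupport a)) :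
    #{b : ι → Bool | #(trueSupport b) = u + s ∧ hammingDist a b = #(trueSupport a) - u + s}
      = (#(trueSupport a)).choose u * (Fintype.card ι - #(trueSupport a)).choose s := by
  rw [← card_compl, ← card_filter_card_inter_eq_card_sdiff_eq]
  refine card_equiv equivFinset fun b ↦ ?_
  simp only [mem_filter, mem_univ, true_and, equivFinset, Equiv.coe_fn_mk,
    hammingDist_eq_card_sdiff_add_card_sdiff]
  have hb := card_inter_add_card_sdiff (trueSupport b) (trueSupport a)
  have ha := card_inter_add_card_sdiff (trueSupport a) (trueSupport b)
  rw [inter_comm] at ha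
  omega

end BoolCube

open BoolCube

lemma hSphere_eq_filter_card_trueSupport (n j : ℕ) :
    hSphere n j = ({x | #(trueSupport x) = j} : Finset (Fin n → Bool)) := rfl

theorem stmt_7_general (n i j k : ℕ) (hij : i ≤ j)
    (hk1 : j - i ≤ k) (hk2 : k ≤ i + j) (hpar : Even (i + j - k)) :
    ((hSphere n i ×ˢ hSphere n j).filter
        (fun p : (Fin n → Bool) × (Fin n → Bool) => hammingDist p.1 p.2 = k)).card
      = n.choose i * i.choose ((i + j - k)/2) * (n - i).choose ((j - i + k)/2) := by
  set u := (i + j - k) / 2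
  set s := (j - i + k) / 2
  obtain ⟨hu, hj, hk⟩ : u ≤ i ∧ j = u + s ∧ k = i - u + s := by
    obtain ⟨r, hr⟩ := hpar
    omega
  have fiber (a) (ha : a ∈ hSphere n i) :
      #{b ∈ hSphere n j | hammingDist a b = k} = i.choose u * (n - i).choose s := by
    rw [hSphere_eq_filter_card_trueSupport, mem_filter] at ha
    rw [hSphere_eq_filter_card_trueSupport, filter_filter, hj, hk, ← ha.2]
    simpa using card_filter_card_trueSupport_eq_and_hammingDist_eq a (ha.2 ▸ hu)
  rw [card_filter, sum_product]
  simp_rw [← card_filter]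
  rw [sum_const_nat fiber, hSphere_eq_filter_card_trueSupport, card_filter_card_trueSupport_eq,
    Fintype.card_fin, mul_assoc]

/-- counting pairs of points on two Hamming spheres at a given distance. -/
theorem stmt_7 (n i j k : ℕ) (hij : i ≤ j) (hjn : j ≤ n)
    (hk1 : j - i ≤ k) (hk2 : k ≤ i + j) (hpar : Even (i + j - k)) :
    ((hSphere n i ×ˢ hSphere n j).filter
        (fun p : (Fin n → Bool) × (Fin n → Bool) => hammingDist p.1 p.2 = k)).card
      = n.choose i * i.choose ((i + j - k)/2) * (n - i).choose ((j - i + k)/2) :=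
  stmt_7_general n i j k hij hk1 hk2 hpar
end

section
/- Let n ∈ ℕ, ρ ∈ (0,1), η ∈ (0,1], and let A, B ⊆ {0,1}^n be sets with |A| = |B| = η·2^n. Then P_ρ(A×B) ≤ η^{2/(1+ρ)}. -/
open Finset Asymptotics Filter

/-!
For a `ρ`-correlated pair `(x, y)` of uniform strings, `P_ρ(A × B) = E[1_A(x) 1_B(y)]` and
`‖1_A‖_q = η^{1/q}`, so with `q = 1 + ρ` the bound is the two-function hypercontractive
inequality `E[f(x) g(y)] ≤ ‖f‖_q ‖g‖_q`. It tensorizes: conditioning on the first bit reduces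
dimension `n + 1` to the one-bit inequality, applied to the `q`-norms of the restrictions of `f`
and `g`. On one bit write `a = (U + V, U - V)` and `b = (U' + V', U' - V')`; then
`E[a(x) b(y)] = U U' + ρ V V'`, and Cauchy–Schwarz for this form reduces everything to the
two-point Bonami inequality `U² + ρ V² ≤ ‖a‖_q²`. By homogeneity that is
`1 + ρ t² ≤ ‖(1 + t, 1 - t)‖_q²`, which follows from Bernoulli's inequality and
`(1 + t)^q + (1 - t)^q ≥ 2 + q ρ t²`, proved by differentiating twice.
-/

open Real

lemma two_le_one_add_rpow_add_one_sub_rpow {c s : ℝ} (hc : c ≤ 0) (hs : s ∈ Set.Ioo (-1) 1) :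
    2 ≤ (1 + s) ^ c + (1 - s) ^ c := by
  obtain ⟨hs₀, hs₁⟩ := hs
  have hprod : 1 ≤ (1 + s) ^ c * (1 - s) ^ c := by
    rw [← mul_rpow (by linarith) (by linarith)]
    exact one_le_rpow_of_pos_of_le_one_of_nonpos (by nlinarith) (by nlinarith [sq_nonneg s]) hc
  nlinarith [sq_nonneg ((1 + s) ^ c - (1 - s) ^ c), rpow_pos_of_pos (by linarith : 0 < 1 + s) c,
    rpow_pos_of_pos (by linarith : 0 < 1 - s) c]

lemma two_mul_mul_le_one_add_rpow_sub_one_sub_rpow {ρ t : ℝ} (hρ : ρ ∈ Set.Icc 0 1)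
    (ht : t ∈ Set.Icc 0 1) : 2 * ρ * t ≤ (1 + t) ^ ρ - (1 - t) ^ ρ := by
  let g : ℝ → ℝ := fun u ↦ (1 + u) ^ ρ - (1 - u) ^ ρ - 2 * ρ * u
  have hg : ∀ u ∈ Set.Ioo (0 : ℝ) 1,
      HasDerivAt g (ρ * (1 + u) ^ (ρ - 1) + ρ * (1 - u) ^ (ρ - 1) - 2 * ρ) u := by
    intro u ⟨hu₀, hu₁⟩
    have h₁ := ((hasDerivAt_id' u).const_add 1).rpow_const (p := ρ) (Or.inl (by linarith))
    have h₂ := ((hasDerivAt_id' u).const_sub 1).rpow_const (p := ρ) (Or.inl (by linarith))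
    refine ((h₁.sub h₂).sub ((hasDerivAt_id' u).const_mul (2 * ρ))).congr_deriv ?_
    ring
  have hmono : MonotoneOn g (Set.Icc 0 1) := by
    refine monotoneOn_of_hasDerivWithinAt_nonneg (convex_Icc 0 1) ?_
      (fun u hu ↦ (hg u (by simpa using hu)).hasDerivWithinAt) (fun u hu ↦ ?_)
    · have : ContinuousOn (fun u : ℝ ↦ (1 + u) ^ ρ - (1 - u) ^ ρ) (Set.Icc 0 1) :=
        ((continuous_const.add continuous_id).rpow_const fun _ ↦ Or.inr hρ.1).continuousOn.sub
          ((continuous_const.sub continuous_id).rpow_const fun _ ↦ Or.inr hρ.1).continuousOn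
      exact this.sub (by fun_prop)
    · rw [interior_Icc] at hu
      have := two_le_one_add_rpow_add_one_sub_rpow (by linarith [hρ.2] : ρ - 1 ≤ 0)
        ⟨by linarith [hu.1], hu.2⟩
      nlinarith [hρ.1]
  have := hmono ⟨le_rfl, zero_le_one⟩ ht ht.1
  norm_num [g] at this
  linarith

lemma two_add_mul_sq_le_one_add_rpow_add_one_sub_rpow {ρ t : ℝ} (hρ : ρ ∈ Set.Icc 0 1)
    (ht : t ∈ Set.Icc 0 1) :
    2 + (1 + ρ) * ρ * t ^ 2 ≤ (1 + t) ^ (1 + ρ) + (1 - t) ^ (1 + ρ) := by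
  let g : ℝ → ℝ := fun u ↦ (1 + u) ^ (1 + ρ) + (1 - u) ^ (1 + ρ) - (1 + ρ) * ρ * u ^ 2
  have hq : 1 ≤ 1 + ρ := by linarith [hρ.1]
  have hg : ∀ u, HasDerivAt g
      ((1 + ρ) * ((1 + u) ^ ρ - (1 - u) ^ ρ - 2 * ρ * u)) u := by
    intro u
    have h₁ := ((hasDerivAt_id' u).const_add 1).rpow_const (p := 1 + ρ) (Or.inr hq)
    have h₂ := ((hasDerivAt_id' u).const_sub 1).rpow_const (p := 1 + ρ) (Or.inr hq)
    refine ((h₁.add h₂).sub ((hasDerivAt_pow 2 u).const_mul ((1 + ρ) * ρ))).congr_deriv ?_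
    simp only [add_sub_cancel_left, Nat.cast_ofNat, Nat.add_one_sub_one, pow_one]
    ring
  have hmono : MonotoneOn g (Set.Icc 0 1) := by
    refine monotoneOn_of_hasDerivWithinAt_nonneg (convex_Icc 0 1)
      (continuous_iff_continuousAt.2 fun u ↦ (hg u).continuousAt).continuousOn
      (fun u _ ↦ (hg u).hasDerivWithinAt) (fun u hu ↦ ?_)
    rw [interior_Icc] at hu
    have := two_mul_mul_le_one_add_rpow_sub_one_sub_rpow hρ ⟨hu.1.le, hu.2.le⟩
    nlinarith [hρ.1]
  have := hmono ⟨le_rfl, zero_le_one⟩ ht ht.1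
  norm_num [g] at this
  linarith

noncomputable def twoPointNorm (q a b : ℝ) : ℝ := ((a ^ q + b ^ q) / 2) ^ (1 / q)

lemma twoPointNorm_comm (q a b : ℝ) : twoPointNorm q a b = twoPointNorm q b a := by
  rw [twoPointNorm, twoPointNorm, add_comm]

lemma twoPointNorm_nonneg (q : ℝ) {a b : ℝ} (ha : 0 ≤ a) (hb : 0 ≤ b) :
    0 ≤ twoPointNorm q a b :=
  rpow_nonneg (div_nonneg (add_nonneg (rpow_nonneg ha q) (rpow_nonneg hb q)) zero_le_two) _

lemma twoPointNorm_mul {q s a b : ℝ} (hs : 0 ≤ s) (ha : 0 ≤ a) (hb : 0 ≤ b) (hq : q ≠ 0) :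
    twoPointNorm q (s * a) (s * b) = s * twoPointNorm q a b := by
  rw [twoPointNorm, twoPointNorm, mul_rpow hs ha, mul_rpow hs hb, ← mul_add, mul_div_assoc,
    mul_rpow (rpow_nonneg hs _)
      (div_nonneg (add_nonneg (rpow_nonneg ha q) (rpow_nonneg hb q)) zero_le_two),
    ← rpow_mul hs, mul_one_div_cancel hq, rpow_one]

lemma one_add_mul_sq_le_twoPointNorm_sq {ρ t : ℝ} (hρ : ρ ∈ Set.Icc 0 1)
    (ht : t ∈ Set.Icc 0 1) : 1 + ρ * t ^ 2 ≤ twoPointNorm (1 + ρ) (1 + t) (1 - t) ^ 2 := by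
  obtain ⟨hρ₀, hρ₁⟩ := hρ
  have hq : 0 < 1 + ρ := by linarith
  have hmean := two_add_mul_sq_le_one_add_rpow_add_one_sub_rpow ⟨hρ₀, hρ₁⟩ ht
  have hbern := one_add_mul_self_le_rpow_one_add (s := (1 + ρ) * ρ * t ^ 2 / 2)
    (by have := mul_nonneg (mul_nonneg hq.le hρ₀) (sq_nonneg t); linarith)
    (p := 2 / (1 + ρ)) (by rw [le_div_iff₀ hq]; linarith)
  have hM : 0 ≤ ((1 + t) ^ (1 + ρ) + (1 - t) ^ (1 + ρ)) / 2 := by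
    have := rpow_nonneg (by linarith [ht.1] : (0 : ℝ) ≤ 1 + t) (1 + ρ)
    have := rpow_nonneg (by linarith [ht.2] : (0 : ℝ) ≤ 1 - t) (1 + ρ)
    positivity
  rw [← rpow_natCast (twoPointNorm _ _ _), twoPointNorm, ← rpow_mul hM, one_div_mul_eq_div,
    Nat.cast_ofNat]
  calc 1 + ρ * t ^ 2 = 1 + 2 / (1 + ρ) * ((1 + ρ) * ρ * t ^ 2 / 2) := by field_simp
    _ ≤ (1 + (1 + ρ) * ρ * t ^ 2 / 2) ^ (2 / (1 + ρ)) := hbern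
    _ ≤ _ := by gcongr; linarith

lemma sq_add_mul_sq_le_twoPointNorm_sq {ρ a b : ℝ} (hρ : ρ ∈ Set.Icc 0 1) (ha : 0 ≤ a)
    (hb : 0 ≤ b) :
    ((a + b) / 2) ^ 2 + ρ * ((a - b) / 2) ^ 2 ≤ twoPointNorm (1 + ρ) a b ^ 2 := by
  wlog hba : b ≤ a generalizing a b
  · rw [twoPointNorm_comm]
    convert this hb ha (le_of_not_ge hba) using 1
    ring
  rcases (add_nonneg ha hb).eq_or_lt with hab | hab
  · obtain ⟨rfl, rfl⟩ : a = 0 ∧ b = 0 := ⟨by linarith, by linarith⟩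
    linarith [sq_nonneg (twoPointNorm (1 + ρ) 0 0)]
  set s := (a + b) / 2
  set t := (a - b) / (a + b)
  have hs : 0 < s := by positivity
  have ht : t ∈ Set.Icc 0 1 :=
    ⟨div_nonneg (by linarith) hab.le, by rw [div_le_one hab]; linarith⟩
  have hat : a = s * (1 + t) := by simp only [s, t]; field_simp; ring
  have hbt : b = s * (1 - t) := by simp only [s, t]; field_simp; ring
  rw [hat, hbt, twoPointNorm_mul hs.le (by linarith [ht.1]) (by linarith [ht.2])
    (by linarith [hρ.1])]
  calc _ = s ^ 2 * (1 + ρ * t ^ 2) := by ring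
    _ ≤ s ^ 2 * twoPointNorm (1 + ρ) (1 + t) (1 - t) ^ 2 := by
      gcongr; exact one_add_mul_sq_le_twoPointNorm_sq hρ ht
    _ = _ := by ring

-- `P(x i = s, y i = t)` for a `ρ`-correlated pair; `corrWeight` is the law of the whole pair.
noncomputable def corrBit (ρ : ℝ) (s t : Bool) : ℝ :=
  if s = t then (1 + ρ) / 4 else (1 - ρ) / 4

lemma corrBit_nonneg {ρ : ℝ} (hρ : ρ ∈ Set.Icc 0 1) (s t : Bool) : 0 ≤ corrBit ρ s t := by
  unfold corrBit; split_ifs <;> linarith [hρ.1, hρ.2]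

lemma sum_corrBit_mul_le_twoPointNorm_mul {ρ : ℝ} (hρ : ρ ∈ Set.Icc 0 1) {a b : Bool → ℝ}
    (ha : ∀ s, 0 ≤ a s) (hb : ∀ t, 0 ≤ b t) :
    ∑ s, ∑ t, corrBit ρ s t * (a s * b t) ≤
      twoPointNorm (1 + ρ) (a false) (a true) * twoPointNorm (1 + ρ) (b false) (b true) := by
  set U := (a false + a true) / 2
  set V := (a false - a true) / 2
  set U' := (b false + b true) / 2
  set V' := (b false - b true) / 2
  have hsum : ∑ s, ∑ t, corrBit ρ s t * (a s * b t) = U * U' + ρ * (V * V') := by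
    simp only [Fintype.sum_bool, corrBit, reduceIte, Bool.false_eq_true, Bool.true_eq_false]
    ring
  have hA := sq_add_mul_sq_le_twoPointNorm_sq hρ (ha false) (ha true)
  have hB := sq_add_mul_sq_le_twoPointNorm_sq hρ (hb false) (hb true)
  -- Cauchy–Schwarz for the positive semidefinite form `U U' + ρ V V'`
  have hcs : (U * U' + ρ * (V * V')) ^ 2 ≤ (U ^ 2 + ρ * V ^ 2) * (U' ^ 2 + ρ * V' ^ 2) := by
    nlinarith [mul_nonneg hρ.1 (sq_nonneg (U * V' - V * U'))]
  rw [hsum]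
  refine le_of_abs_le (abs_le_of_sq_le_sq ?_ (mul_nonneg (twoPointNorm_nonneg _ (ha _) (ha _))
    (twoPointNorm_nonneg _ (hb _) (hb _))))
  rw [mul_pow]
  exact hcs.trans (mul_le_mul hA hB
    (add_nonneg (sq_nonneg _) (mul_nonneg hρ.1 (sq_nonneg _))) (sq_nonneg _))

noncomputable def corrWeight (ρ : ℝ) {n : ℕ} (x y : Fin n → Bool) : ℝ :=
  ∏ i, corrBit ρ (x i) (y i)

lemma corrWeight_cons (ρ : ℝ) {n : ℕ} (s t : Bool) (x y : Fin n → Bool) :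
    corrWeight ρ (Fin.cons s x : Fin (n + 1) → Bool) (Fin.cons t y) =
      corrBit ρ s t * corrWeight ρ x y := by
  simp [corrWeight, Fin.prod_univ_succ]

lemma sum_fun_fin_succ {α M : Type*} [Fintype α] [AddCommMonoid M] {n : ℕ}
    (f : (Fin (n + 1) → α) → M) :
    ∑ z, f z = ∑ s, ∑ x : Fin n → α, f (Fin.cons s x) := by
  rw [← (Fin.consEquiv fun _ ↦ α).sum_comp, Fintype.sum_prod_type]
  rfl

lemma sum_corrWeight_succ (ρ : ℝ) {n : ℕ} (f g : (Fin (n + 1) → Bool) → ℝ) :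
    ∑ z, ∑ z', corrWeight ρ z z' * f z * g z' =
      ∑ s, ∑ t, corrBit ρ s t *
        ∑ x : Fin n → Bool, ∑ y, corrWeight ρ x y * f (Fin.cons s x) * g (Fin.cons t y) := by
  simp only [sum_fun_fin_succ, corrWeight_cons, Finset.mul_sum]
  refine Finset.sum_congr rfl fun s _ ↦ ?_
  rw [Finset.sum_comm]
  refine Finset.sum_congr rfl fun t _ ↦ Finset.sum_congr rfl fun x _ ↦
    Finset.sum_congr rfl fun y _ ↦ by ring

lemma pNorm_rpow {n : ℕ} {q : ℝ} (hq : q ≠ 0) (f : (Fin n → Bool) → ℝ) :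
    pNorm n q f ^ q = (2 : ℝ)⁻¹ ^ n * ∑ x, |f x| ^ q := by
  rw [pNorm, one_div, rpow_inv_rpow (by positivity) hq]

lemma pNorm_nonneg (n : ℕ) (q : ℝ) (f : (Fin n → Bool) → ℝ) : 0 ≤ pNorm n q f := by
  unfold pNorm; positivity

lemma pNorm_zero {q : ℝ} (hq : q ≠ 0) (f : (Fin 0 → Bool) → ℝ) (x : Fin 0 → Bool) :
    pNorm 0 q f = |f x| := by
  rw [pNorm, Fintype.sum_unique, pow_zero, one_mul, one_div, rpow_rpow_inv (abs_nonneg _) hq,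
    Subsingleton.elim x]

lemma pNorm_succ {n : ℕ} {q : ℝ} (hq : q ≠ 0) (f : (Fin (n + 1) → Bool) → ℝ) :
    pNorm (n + 1) q f = twoPointNorm q (pNorm n q fun x ↦ f (Fin.cons false x))
      (pNorm n q fun x ↦ f (Fin.cons true x)) := by
  rw [twoPointNorm, pNorm_rpow hq, pNorm_rpow hq, pNorm, sum_fun_fin_succ, Fintype.sum_bool,
    pow_succ]
  congr 1
  ring

theorem sum_corrWeight_mul_le_pNorm_mul_pNorm {ρ : ℝ} (hρ : ρ ∈ Set.Icc 0 1) :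
    ∀ {n : ℕ} (f g : (Fin n → Bool) → ℝ),
      ∑ x, ∑ y, corrWeight ρ x y * f x * g y ≤ pNorm n (1 + ρ) f * pNorm n (1 + ρ) g
  | 0, f, g => by
    have hq : 1 + ρ ≠ 0 := by linarith [hρ.1]
    simp only [Fintype.sum_unique, corrWeight, Finset.univ_eq_empty, Finset.prod_empty, one_mul]
    rw [pNorm_zero hq f, pNorm_zero hq g, ← abs_mul]
    exact le_abs_self _
  | n + 1, f, g => by
    have hq : 1 + ρ ≠ 0 := by linarith [hρ.1]
    calc ∑ z, ∑ z', corrWeight ρ z z' * f z * g z'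
        = ∑ s, ∑ t, corrBit ρ s t *
            ∑ x, ∑ y, corrWeight ρ x y * f (Fin.cons s x) * g (Fin.cons t y) :=
          sum_corrWeight_succ ρ f g
      _ ≤ ∑ s, ∑ t, corrBit ρ s t * ((pNorm n (1 + ρ) fun x ↦ f (Fin.cons s x)) *
            pNorm n (1 + ρ) fun y ↦ g (Fin.cons t y)) := by
          gcongr with s _ t _
          · exact corrBit_nonneg hρ s t
          · exact sum_corrWeight_mul_le_pNorm_mul_pNorm hρ _ _
      _ ≤ pNorm (n + 1) (1 + ρ) f * pNorm (n + 1) (1 + ρ) g := by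
          rw [pNorm_succ hq, pNorm_succ hq]
          exact sum_corrBit_mul_le_twoPointNorm_mul hρ (fun _ ↦ pNorm_nonneg _ _ _)
            (fun _ ↦ pNorm_nonneg _ _ _)

lemma corrWeight_eq {ρ : ℝ} (hρ : ρ ≠ -1) {n : ℕ} (x y : Fin n → Bool) :
    corrWeight ρ x y =
      (2 : ℝ)⁻¹ ^ n * ((1 + ρ) / 2) ^ n * ((1 - ρ) / (1 + ρ)) ^ hammingDist x y := by
  have hq : 1 + ρ ≠ 0 := fun h ↦ hρ (by linarith)
  have hbit : ∀ i, corrBit ρ (x i) (y i) =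
      (2 : ℝ)⁻¹ * ((1 + ρ) / 2) * ((1 - ρ) / (1 + ρ)) ^ (if x i = y i then 0 else 1) := by
    intro i
    unfold corrBit
    split_ifs <;> field_simp <;> ring
  simp only [corrWeight, hbit, Finset.prod_mul_distrib, Finset.prod_const, Finset.card_univ,
    Fintype.card_fin, Finset.prod_pow_eq_pow_sum, Finset.sum_ite, Finset.sum_const_zero,
    Finset.sum_const, smul_eq_mul, mul_one, zero_add, hammingDist]

lemma Pxy_eq_sum_corrWeight {ρ : ℝ} (hρ : ρ ≠ -1) {n : ℕ} (A B : Finset (Fin n → Bool)) :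
    Pxy n ρ A B = ∑ x, ∑ y, corrWeight ρ x y * indA n A x * indA n B y := by
  simp [Pxy, indA, corrWeight_eq hρ, Finset.sum_ite_mem]

lemma pNorm_indA {q : ℝ} (hq : q ≠ 0) {n : ℕ} (A : Finset (Fin n → Bool)) :
    pNorm n q (indA n A) = (A.card / 2 ^ n) ^ (1 / q) := by
  have h : ∀ x, |indA n A x| ^ q = indA n A x := fun x ↦ by
    unfold indA; split_ifs <;> simp [zero_rpow hq]
  rw [pNorm]
  simp only [h]
  simp only [indA, Finset.sum_boole, Finset.filter_mem_eq_inter, Finset.univ_inter]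
  rw [inv_pow, inv_mul_eq_div]

theorem Pxy_le_rpow_mul_rpow {ρ : ℝ} (hρ : ρ ∈ Set.Icc 0 1) {n : ℕ}
    (A B : Finset (Fin n → Bool)) :
    Pxy n ρ A B ≤ (A.card / 2 ^ n) ^ (1 / (1 + ρ)) * (B.card / 2 ^ n) ^ (1 / (1 + ρ)) := by
  have hq : 1 + ρ ≠ 0 := by linarith [hρ.1]
  rw [Pxy_eq_sum_corrWeight (by linarith [hρ.1]), ← pNorm_indA hq, ← pNorm_indA hq]
  exact sum_corrWeight_mul_le_pNorm_mul_pNorm hρ _ _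

theorem stmt_11_general (n : ℕ) (ρ η : ℝ) (hρ : ρ ∈ Set.Ioo (0:ℝ) 1)
    (A B : Finset (Fin n → Bool))
    (hA : (A.card : ℝ) = η * 2 ^ n) (hB : (B.card : ℝ) = η * 2 ^ n) :
    Pxy n ρ A B ≤ η ^ (2/(1 + ρ)) := by
  have hA' : A.card / 2 ^ n = η := by rw [hA, mul_div_cancel_right₀ _ (by positivity)]
  have hB' : B.card / 2 ^ n = η := by rw [hB, mul_div_cancel_right₀ _ (by positivity)]
  have hη : 0 ≤ η := hA' ▸ div_nonneg (Nat.cast_nonneg _) (by positivity)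
  calc Pxy n ρ A B ≤ η ^ (1 / (1 + ρ)) * η ^ (1 / (1 + ρ)) := by
        have h := Pxy_le_rpow_mul_rpow (Set.Ioo_subset_Icc_self hρ) A B
        rwa [hA', hB'] at h
    _ = η ^ (2 / (1 + ρ)) := by
        rw [← sq, ← rpow_natCast, ← rpow_mul hη]
        congr 1
        push_cast
        ring

/-- the hypercontractive upper bound `P_ρ(A×B) ≤ η^{2/(1+ρ)}`. -/
theorem stmt_11 (n : ℕ) (ρ η : ℝ) (hρ : ρ ∈ Set.Ioo (0:ℝ) 1) (hη : η ∈ Set.Ioc (0:ℝ) 1)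
    (A B : Finset (Fin n → Bool))
    (hA : (A.card : ℝ) = η * 2 ^ n) (hB : (B.card : ℝ) = η * 2 ^ n) :
    Pxy n ρ A B ≤ η ^ (2/(1 + ρ)) :=
  stmt_11_general n ρ η hρ A B hA hB
end

section
/- The function v(t) = (1−2t) / ln((1−t)/t) is strictly increasing on the open interval (0, 1/2). -/
/-!
With `x = (1 - t) / t > 1`, the numerator of `v'(t)` is `(x - x⁻¹) - 2 log x`, which is positive
because `x - x⁻¹ = 2 sinh (log x)` and `y < sinh y` for `y > 0`.
-/

open Finset Asymptotics Filter

open Real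

lemma two_mul_log_lt_sub_inv {x : ℝ} (hx : 1 < x) : 2 * log x < x - x⁻¹ := by
  have h := self_lt_sinh_iff.mpr (log_pos hx)
  rw [sinh_log (by linarith)] at h
  linarith

lemma hasDerivAt_log_one_sub_div_self {t : ℝ} (ht₀ : 0 < t) (ht₁ : t < 1) :
    HasDerivAt (fun t : ℝ => log ((1 - t) / t)) (-(t * (1 - t))⁻¹) t := by
  have hquot : HasDerivAt (fun t : ℝ => (1 - t) / t) ((-1 * t - (1 - t) * 1) / t ^ 2) t :=
    ((hasDerivAt_id t).const_sub 1).div (hasDerivAt_id t) ht₀.ne'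
  convert hquot.log (div_pos (by linarith) ht₀).ne' using 1
  field_simp
  ring

lemma hasDerivAt_one_sub_two_mul_div_log {t : ℝ} (ht₀ : 0 < t) (ht : t < 1 / 2) :
    HasDerivAt (fun t : ℝ => (1 - 2 * t) / log ((1 - t) / t))
      ((-2 * log ((1 - t) / t) + (1 - 2 * t) * (t * (1 - t))⁻¹) / log ((1 - t) / t) ^ 2) t := by
  have hlog : log ((1 - t) / t) ≠ 0 :=
    (log_pos ((one_lt_div ht₀).mpr (by linarith))).ne'
  have hnum : HasDerivAt (fun t : ℝ => 1 - 2 * t) (-2) t := by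
    simpa using ((hasDerivAt_id t).const_mul 2).const_sub 1
  exact (hnum.div (hasDerivAt_log_one_sub_div_self ht₀ (by linarith)) hlog).congr_deriv
    (by ring)

/-- `v(t) = (1−2t)/ln((1−t)/t)` is strictly increasing on `(0,1/2)`. -/
theorem stmt_14 :
    StrictMonoOn (fun t : ℝ => (1 - 2*t) / Real.log ((1 - t)/t)) (Set.Ioo (0:ℝ) (1/2)) := by
  refine strictMonoOn_of_deriv_pos (convex_Ioo 0 (1 / 2))
    (fun t ⟨ht₀, ht⟩ => (hasDerivAt_one_sub_two_mul_div_log ht₀ ht).continuousAt.continuousWithinAt)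
    (fun t ht => ?_)
  rw [interior_Ioo] at ht
  obtain ⟨ht₀, ht⟩ := ht
  rw [(hasDerivAt_one_sub_two_mul_div_log ht₀ ht).deriv]
  have hx : 1 < (1 - t) / t := (one_lt_div ht₀).mpr (by linarith)
  have hsub : (1 - t) / t - ((1 - t) / t)⁻¹ = (1 - 2 * t) * (t * (1 - t))⁻¹ := by
    have : 1 - t ≠ 0 := by linarith
    field_simp
    ring
  have hkey := two_mul_log_lt_sub_inv hx
  rw [hsub] at hkey
  exact div_pos (by linarith) (pow_pos (log_pos hx) 2)
end
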